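/- Let φ : ℝ → [0,∞) be a probability density function whose CDF Φ(x) := ∫_{−∞}^x φ(t) dt is continuous, strictly increasing and surjective onto (0,1). Then for all k, k′ ∈ N₂, m ∈ L_{k,2} and m′ ∈ L_{k′,2}: ∫_ℝ w^{(φ)}_{k,m,2}(x) · w^{(φ)}_{k′,m′,2}(x) · φ(x) dx = 1 if (k,m) = (k′,m′) and = 0 otherwise; that is, the functions w^{(φ)}_{k,m,2} form an orthonormal system in L²(ℝ, φ(x)dx). -/

import Mathlib

open scoped Classical
open MeasureTheory

open scoped Classical
open MeasureTheory

noncomputable section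

/-- The binary digit `ξ_{i+1}` of `x ∈ [0,1)`. -/
def rdigit (x : ℝ) (i : ℕ) : ℕ := (⌊x * 2 ^ (i + 1)⌋).toNat % 2

/-- The `k`-th Walsh function in base `2`. -/
def walsh (k : ℕ) (x : ℝ) : ℝ :=
  (-1 : ℝ) ^ ∑ i ∈ Finset.range (Nat.size k), (Nat.testBit k i).toNat * rdigit x i

/-- `k` is a sum of two distinct powers of two, i.e. `k ∈ N₂ ∖ N₁`. -/
def twoBit (k : ℕ) : Prop := ∃ a₁ a₂ : ℕ, a₂ < a₁ ∧ k = 2 ^ a₁ + 2 ^ a₂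

/-- `k ∈ N₁`, i.e. `k = 0` or `k` is a power of two. -/
def inN1 (k : ℕ) : Prop := k = 0 ∨ ∃ a : ℕ, k = 2 ^ a

/-- `k ∈ N₂`. -/
def inN2 (k : ℕ) : Prop := inN1 k ∨ twoBit k

/-- For `k = 2^{a₁} + 2^{a₂}` with `a₁ > a₂`, this is the smaller exponent `a₂`. -/
def lowExp (k : ℕ) : ℕ := Nat.log2 (k % 2 ^ Nat.log2 k)

/-- The index set `L_{k,2}`. -/
def L2 (k : ℕ) : Set ℕ := if twoBit k then {m | m < 2 ^ lowExp k} else {0}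

/-- The order-2 localized Walsh function `w_{k,m,2}`. -/
def w2 (k m : ℕ) (x : ℝ) : ℝ :=
  if twoBit k then
    Real.sqrt (2 ^ lowExp k) *
      Set.indicator (Set.Ico ((m : ℝ) / 2 ^ lowExp k) (((m : ℝ) + 1) / 2 ^ lowExp k))
        (fun _ => (1:ℝ)) x *
      walsh k x
  else walsh k x

/-!
Since `Φ` is the distribution function of `φ`, it pushes `φ(x) dx` forward to Lebesgue measure
on `(0, 1)`, so the integral equals `∫₀¹ w_{k,m,2} w_{k',m',2}`. On `[0, 1)` every `w_{k,m,2}` is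
`2^{s/2} 1_{I(m,s)} wal_k` with `s = a₂` (and `s = 0` for `k ∈ N₁`), and
`wal_k wal_{k'} = wal_{k ⊕ k'}`. Dyadic intervals are nested or disjoint, so the product lives on
the finer of the two intervals, say the one of `k`, or vanishes. If `k ≠ k'` then `k ⊕ k'` has a
bit at a position `≥ s`, because an element of `N₂` that agrees with `2^{a₁} + 2^{a₂}` in all bits from `a₂` on
must equal it. Hence `wal_{k ⊕ k'}` integrates to zero over each dyadic interval of level `s`:
it is constant with opposite signs on the two halves of any interval one level above its finest
scale.
-/

open Set

-- `I(j, a)` in the notation of the paper.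
def dyadicIco (a j : ℕ) : Set ℝ := Ico ((j : ℝ) / 2 ^ a) (((j : ℝ) + 1) / 2 ^ a)

section Dyadic

variable {a j : ℕ} {x : ℝ}

lemma measurableSet_dyadicIco (a j : ℕ) : MeasurableSet (dyadicIco a j) := measurableSet_Ico

lemma mem_dyadicIco_iff : x ∈ dyadicIco a j ↔ ⌊x * 2 ^ a⌋ = j := by
  rw [dyadicIco, mem_Ico, Int.floor_eq_iff, div_le_iff₀ (by positivity),
    lt_div_iff₀ (by positivity)]
  push_cast
  rfl

lemma mem_dyadicIco_div {s e m : ℕ} (hx : x ∈ dyadicIco (s + e) m) :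
    x ∈ dyadicIco s (m / 2 ^ e) := by
  rw [mem_dyadicIco_iff] at hx ⊢
  have hscale : x * 2 ^ s = x * 2 ^ (s + e) / ((2 ^ e : ℕ) : ℝ) := by
    push_cast
    rw [pow_add]
    field_simp
  rw [hscale, Int.floor_div_natCast, hx]
  push_cast
  rfl

lemma dyadicIco_disjoint {j' : ℕ} (h : j ≠ j') : Disjoint (dyadicIco a j) (dyadicIco a j') :=
  disjoint_left.2 fun _ hx hx' =>
    h (by rw [mem_dyadicIco_iff] at hx hx'; exact_mod_cast hx.symm.trans hx')

lemma dyadicIco_subset_Ico (hj : j < 2 ^ a) : dyadicIco a j ⊆ Ico 0 1 :=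
  Ico_subset_Ico (by positivity) (by rw [div_le_one (by positivity)]; exact_mod_cast hj)

lemma dyadicIco_eq_union (s j : ℕ) :
    dyadicIco s j = dyadicIco (s + 1) (2 * j) ∪ dyadicIco (s + 1) (2 * j + 1) := by
  have hleft : ((2 * j : ℕ) : ℝ) / 2 ^ (s + 1) = j / 2 ^ s := by
    push_cast; rw [pow_succ]; field_simp
  have hright : (((2 * j + 1 : ℕ) : ℝ) + 1) / 2 ^ (s + 1) = (j + 1) / 2 ^ s := by
    push_cast; rw [pow_succ]; field_simp; ring
  have hmid : ((2 * j : ℕ) : ℝ) + 1 = ((2 * j + 1 : ℕ) : ℝ) := by push_cast; ring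
  rw [dyadicIco, dyadicIco, dyadicIco, hmid, Ico_union_Ico_eq_Ico, hleft, hright]
  · exact div_le_div_of_nonneg_right (by push_cast; linarith) (by positivity)
  · exact div_le_div_of_nonneg_right (by push_cast; linarith) (by positivity)

lemma volume_real_dyadicIco (a j : ℕ) : volume.real (dyadicIco a j) = (2 ^ a)⁻¹ := by
  rw [dyadicIco, Real.volume_real_Ico_of_le (by gcongr; linarith)]
  field_simp
  ring

lemma rdigit_of_mem_dyadicIco {i : ℕ} (hi : i < a) (hx : x ∈ dyadicIco a j) :
    rdigit x i = j / 2 ^ (a - 1 - i) % 2 := by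
  have hx' : x ∈ dyadicIco (i + 1) (j / 2 ^ (a - 1 - i)) :=
    mem_dyadicIco_div (by rwa [show i + 1 + (a - 1 - i) = a by omega])
  rw [rdigit, mem_dyadicIco_iff.1 hx', Int.toNat_natCast]

lemma setIntegral_dyadicIco_eq_add {f : ℝ → ℝ} (s j : ℕ) (hf : IntegrableOn f (dyadicIco s j)) :
    ∫ x in dyadicIco s j, f x =
      (∫ x in dyadicIco (s + 1) (2 * j), f x) + ∫ x in dyadicIco (s + 1) (2 * j + 1), f x := by
  rw [dyadicIco_eq_union] at hf ⊢
  exact setIntegral_union (dyadicIco_disjoint (by omega)) (measurableSet_dyadicIco _ _)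
    hf.left_of_union hf.right_of_union

end Dyadic

section Walsh

variable {n a j : ℕ} {x y : ℝ}

lemma measurable_walsh (k : ℕ) : Measurable (walsh k) := by
  have hdigit (i : ℕ) : Measurable fun x => rdigit x i :=
    (measurable_of_countable fun z : ℤ => z.toNat % 2).comp (measurable_id.mul_const _).floor
  exact measurable_const.pow (Finset.measurable_sum _ fun i _ => (hdigit i).const_mul _)

lemma norm_walsh (k : ℕ) (x : ℝ) : ‖walsh k x‖ = 1 := by
  simp [walsh]

lemma walsh_zero (x : ℝ) : walsh 0 x = 1 := by
  simp [walsh]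

lemma walsh_eq_prod {N : ℕ} (hN : Nat.size n ≤ N) (x : ℝ) :
    walsh n x = ∏ i ∈ Finset.range N, (-1 : ℝ) ^ ((Nat.testBit n i).toNat * rdigit x i) := by
  rw [walsh, ← Finset.prod_pow_eq_pow_sum]
  refine Finset.prod_subset (Finset.range_subset_range.2 hN) fun i _ hi => ?_
  rw [Finset.mem_range, not_lt] at hi
  simp [Nat.testBit_lt_two_pow (Nat.size_le.1 hi)]

lemma walsh_mul (k k' : ℕ) (x : ℝ) : walsh k x * walsh k' x = walsh (k ^^^ k') x := by
  set N := max (Nat.size k) (Nat.size k')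
  have hxor : Nat.size (k ^^^ k') ≤ N :=
    Nat.size_le.2 (Nat.xor_lt_two_pow (Nat.size_le.1 (le_max_left _ _))
      (Nat.size_le.1 (le_max_right _ _)))
  rw [walsh_eq_prod (le_max_left _ _), walsh_eq_prod (le_max_right _ _), walsh_eq_prod hxor,
    ← Finset.prod_mul_distrib]
  refine Finset.prod_congr rfl fun i _ => ?_
  rw [Nat.testBit_xor]
  cases Nat.testBit k i <;> cases Nat.testBit k' i <;> simp [← pow_add, ← two_mul, pow_mul]

lemma integrableOn_walsh_dyadicIco (n a j : ℕ) : IntegrableOn (walsh n) (dyadicIco a j) :=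
  Measure.integrableOn_of_bounded (M := 1) (by simp [dyadicIco])
    (measurable_walsh n).aestronglyMeasurable (ae_of_all _ fun x => (norm_walsh n x).le)

lemma walsh_of_mem_dyadicIco (hna : Nat.size n ≤ a) (hx : x ∈ dyadicIco a j) :
    walsh n x = (-1) ^ ∑ i ∈ Finset.range (Nat.size n),
      (Nat.testBit n i).toNat * (j / 2 ^ (a - 1 - i) % 2) := by
  rw [walsh]
  congr 1
  refine Finset.sum_congr rfl fun i hi => ?_
  rw [rdigit_of_mem_dyadicIco ((Finset.mem_range.1 hi).trans_le hna) hx]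

lemma walsh_eq_of_mem_dyadicIco (hna : Nat.size n ≤ a) (hx : x ∈ dyadicIco a j)
    (hy : y ∈ dyadicIco a j) : walsh n x = walsh n y := by
  rw [walsh_of_mem_dyadicIco hna hx, walsh_of_mem_dyadicIco hna hy]

-- Points of the two halves have the same binary digits except the one paired with the top bit
-- of `n`.
lemma walsh_neg_of_mem_dyadicIco (hn : n ≠ 0) {t : ℕ} (hx : x ∈ dyadicIco (Nat.size n) (2 * t))
    (hy : y ∈ dyadicIco (Nat.size n) (2 * t + 1)) : walsh n y = -walsh n x := by
  obtain ⟨b, hb⟩ : ∃ b, Nat.size n = b + 1 :=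
    Nat.exists_eq_add_one_of_ne_zero (Nat.size_pos.2 (Nat.pos_of_ne_zero hn)).ne'
  have htop : Nat.testBit n b = true :=
    Nat.testBit_of_two_pow_le_and_two_pow_add_one_gt (Nat.lt_size.1 (by omega))
      (hb ▸ Nat.lt_size_self n)
  have hlow : ∀ i ∈ Finset.range b,
      (2 * t + 1) / 2 ^ (b + 1 - 1 - i) = 2 * t / 2 ^ (b + 1 - 1 - i) := by
    intro i hi
    obtain ⟨c, hc⟩ : ∃ c, b + 1 - 1 - i = c + 1 := ⟨b - 1 - i, by simp at hi; omega⟩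
    rw [hc, pow_succ', ← Nat.div_div_eq_div_mul, ← Nat.div_div_eq_div_mul]
    congr 1
    omega
  rw [walsh_of_mem_dyadicIco le_rfl hx, walsh_of_mem_dyadicIco le_rfl hy, hb,
    Finset.sum_range_succ, Finset.sum_range_succ,
    Finset.sum_congr rfl fun i hi => by rw [hlow i hi]]
  simp [htop, pow_succ]

lemma setIntegral_walsh_dyadicIco_top {n : ℕ} (hn : n ≠ 0) (j : ℕ) :
    ∫ x in dyadicIco (Nat.size n - 1) j, walsh n x = 0 := by
  have hsize : Nat.size n - 1 + 1 = Nat.size n := by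
    have := Nat.size_pos.2 (Nat.pos_of_ne_zero hn); omega
  set x₀ : ℝ := ((2 * j : ℕ) : ℝ) / 2 ^ Nat.size n
  have hx₀ : x₀ ∈ dyadicIco (Nat.size n) (2 * j) :=
    ⟨le_rfl, div_lt_div_of_pos_right (lt_add_one _) (by positivity)⟩
  rw [setIntegral_dyadicIco_eq_add _ _ (integrableOn_walsh_dyadicIco _ _ _), hsize,
    setIntegral_congr_fun (measurableSet_dyadicIco _ _)
      fun x hx => walsh_eq_of_mem_dyadicIco le_rfl hx hx₀,
    setIntegral_congr_fun (measurableSet_dyadicIco _ _)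
      fun y hy => walsh_neg_of_mem_dyadicIco hn hx₀ hy]
  simp [volume_real_dyadicIco]

lemma setIntegral_walsh_dyadicIco {n s : ℕ} (hs : s < Nat.size n) (j : ℕ) :
    ∫ x in dyadicIco s j, walsh n x = 0 := by
  have hn : n ≠ 0 := by rintro rfl; simp at hs
  refine Nat.decreasingInduction (motive := fun s _ => ∀ j, ∫ x in dyadicIco s j, walsh n x = 0)
    (fun s _ ih j => ?_) (setIntegral_walsh_dyadicIco_top hn) (Nat.le_sub_one_of_lt hs) j
  rw [setIntegral_dyadicIco_eq_add _ _ (integrableOn_walsh_dyadicIco _ _ _), ih, ih, add_zero]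

end Walsh

section IndexSets

variable {k k' a₁ a₂ : ℕ}

lemma testBit_two_pow_add_two_pow (h : a₂ < a₁) (i : ℕ) :
    Nat.testBit (2 ^ a₁ + 2 ^ a₂) i = (decide (a₁ = i) || decide (a₂ = i)) := by
  rcases lt_trichotomy i a₁ with hi | rfl | hi
  · rw [Nat.testBit_two_pow_add_gt hi, Nat.testBit_two_pow]
    simp [hi.ne']
  · rw [Nat.testBit_two_pow_add_eq, Nat.testBit_two_pow]
    simp [h.ne]
  · rw [Nat.testBit_lt_two_pow]
    · simp [hi.ne, (h.trans hi).ne]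
    · calc 2 ^ a₁ + 2 ^ a₂ < 2 ^ a₁ + 2 ^ a₁ := by gcongr; norm_num
        _ = 2 ^ (a₁ + 1) := by ring
        _ ≤ 2 ^ i := Nat.pow_le_pow_right (by norm_num) hi

lemma lowExp_two_pow_add_two_pow (h : a₂ < a₁) : lowExp (2 ^ a₁ + 2 ^ a₂) = a₂ := by
  have hlog : Nat.log2 (2 ^ a₁ + 2 ^ a₂) = a₁ := by
    have hne : 2 ^ a₁ + 2 ^ a₂ ≠ 0 := by positivity
    have hlt : 2 ^ a₁ + 2 ^ a₂ < 2 ^ (a₁ + 1) := by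
      have := Nat.pow_lt_pow_right (show 1 < 2 by norm_num) h
      rw [pow_succ]; omega
    have := (Nat.log2_lt hne).2 hlt
    have := (Nat.le_log2 hne).2 (Nat.le_add_right (2 ^ a₁) (2 ^ a₂))
    omega
  rw [lowExp, hlog, Nat.add_mod_left, Nat.mod_eq_of_lt (Nat.pow_lt_pow_right (by norm_num) h),
    Nat.log2_two_pow]

lemma lowExp_of_inN1 (h : inN1 k) : lowExp k = 0 := by
  rcases h with rfl | ⟨a, rfl⟩ <;> simp [lowExp]

-- An element of `N₂` has at most two bits.
lemma eq_two_pow_add_two_pow_of_testBit (hk : inN2 k) (h : a₂ < a₁) (h₁ : Nat.testBit k a₁)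
    (h₂ : Nat.testBit k a₂) : k = 2 ^ a₁ + 2 ^ a₂ := by
  rcases hk with (rfl | ⟨b, rfl⟩) | ⟨b₁, b₂, hb, rfl⟩
  · simp at h₁
  · simp only [Nat.testBit_two_pow, decide_eq_true_eq] at h₁ h₂
    omega
  · simp only [testBit_two_pow_add_two_pow hb, Bool.or_eq_true, decide_eq_true_eq] at h₁ h₂
    obtain ⟨rfl, rfl⟩ : b₁ = a₁ ∧ b₂ = a₂ := by omega
    rfl

lemma lowExp_lt_size_xor (hk : inN2 k) (hk' : inN2 k') (hne : k ≠ k') :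
    lowExp k < Nat.size (k ^^^ k') := by
  by_contra! hsize
  have hagree (i : ℕ) (hi : lowExp k ≤ i) : Nat.testBit k i = Nat.testBit k' i := by
    have := Nat.testBit_lt_two_pow ((Nat.size_le.1 hsize).trans_le
      (Nat.pow_le_pow_right (by norm_num) hi))
    rw [Nat.testBit_xor] at this
    revert this
    cases Nat.testBit k i <;> cases Nat.testBit k' i <;> simp
  rcases hk with hk1 | ⟨a₁, a₂, ha, rfl⟩
  · rw [lowExp_of_inN1 hk1] at hagree
    exact hne (Nat.eq_of_testBit_eq fun i => hagree i (Nat.zero_le i))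
  · rw [lowExp_two_pow_add_two_pow ha] at hagree
    have hbit (i : ℕ) (hi : a₂ ≤ i) (h : Nat.testBit (2 ^ a₁ + 2 ^ a₂) i) :
        Nat.testBit k' i := hagree i hi ▸ h
    refine hne (eq_two_pow_add_two_pow_of_testBit hk' ha ?_ ?_).symm <;>
      refine hbit _ (by omega) ?_ <;> simp [testBit_two_pow_add_two_pow ha]

end IndexSets

section LocalizedWalsh

variable {k k' m m' : ℕ}

lemma lt_two_pow_lowExp_of_mem_L2 (hm : m ∈ L2 k) : m < 2 ^ lowExp k := by
  unfold L2 at hm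
  split_ifs at hm
  · exact hm
  · rw [mem_singleton_iff.1 hm]; positivity

lemma measurable_w2 (k m : ℕ) : Measurable (w2 k m) := by
  unfold w2
  split_ifs
  · exact (measurable_const.mul (measurable_const.indicator measurableSet_Ico)).mul
      (measurable_walsh k)
  · exact measurable_walsh k

-- For `k ∈ N₁` we have `lowExp k = 0` and `m = 0`, so the indicator is that of `[0, 1)`.
lemma w2_eq_indicator (hk : inN2 k) (hm : m ∈ L2 k) {y : ℝ} (hy : y ∈ Ico 0 1) :
    w2 k m y = √(2 ^ lowExp k) * (dyadicIco (lowExp k) m).indicator (walsh k) y := by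
  by_cases htb : twoBit k
  · rw [w2, if_pos htb, mul_assoc, ← indicator_mul_left]
    simp only [one_mul]
    rfl
  · have hk1 : inN1 k := hk.resolve_right htb
    rw [L2, if_neg htb, mem_singleton_iff] at hm
    subst hm
    rw [w2, if_neg htb, lowExp_of_inN1 hk1, indicator_of_mem (by simpa [dyadicIco] using hy)]
    simp

lemma dyadicIco_inter_eq_or {s s' : ℕ} (hss : s' ≤ s) (m m' : ℕ) :
    dyadicIco s m ∩ dyadicIco s' m' = dyadicIco s m ∨ dyadicIco s m ∩ dyadicIco s' m' = ∅ := by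
  obtain ⟨e, rfl⟩ := Nat.exists_eq_add_of_le hss
  by_cases hm : m / 2 ^ e = m'
  · left
    exact inter_eq_left.2 fun x hx => hm ▸ mem_dyadicIco_div hx
  · right
    refine eq_empty_of_forall_notMem fun x ⟨hx, hx'⟩ => ?_
    exact disjoint_left.1 (dyadicIco_disjoint hm) (mem_dyadicIco_div hx) hx'

lemma integral_w2_mul_w2 (hk : inN2 k) (hk' : inN2 k') (hm : m ∈ L2 k) (hm' : m' ∈ L2 k') :
    ∫ y in Ico 0 1, w2 k m y * w2 k' m' y = if (k, m) = (k', m') then 1 else 0 := by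
  wlog hss : lowExp k' ≤ lowExp k generalizing k k' m m'
  · simp_rw [mul_comm (w2 k m _), this hk' hk hm' hm (le_of_not_ge hss), eq_comm]
  have hsub : dyadicIco (lowExp k) m ∩ dyadicIco (lowExp k') m' ⊆ Ico 0 1 :=
    inter_subset_left.trans (dyadicIco_subset_Ico (lt_two_pow_lowExp_of_mem_L2 hm))
  have hprod : ∀ y ∈ Ico (0 : ℝ) 1, w2 k m y * w2 k' m' y =
      (√(2 ^ lowExp k) * √(2 ^ lowExp k')) *
        (dyadicIco (lowExp k) m ∩ dyadicIco (lowExp k') m').indicator (walsh (k ^^^ k')) y := by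
    intro y hy
    rw [w2_eq_indicator hk hm hy, w2_eq_indicator hk' hm' hy, mul_mul_mul_comm,
      ← inter_indicator_mul]
    simp only [walsh_mul]
  rw [setIntegral_congr_fun measurableSet_Ico hprod, integral_const_mul,
    setIntegral_indicator ((measurableSet_dyadicIco _ _).inter (measurableSet_dyadicIco _ _)),
    inter_eq_right.2 hsub]
  by_cases hkk : k = k'
  · subst hkk
    by_cases hmm : m = m'
    · subst hmm
      rw [if_pos rfl, inter_self, Nat.xor_self]
      simp only [walsh_zero]
      rw [setIntegral_const, volume_real_dyadicIco, smul_eq_mul, mul_one,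
        Real.mul_self_sqrt (by positivity), mul_inv_cancel₀ (by positivity)]
    · rw [if_neg (by simp [hmm]), (dyadicIco_disjoint hmm).inter_eq, Measure.restrict_empty,
        integral_zero_measure, mul_zero]
  · rw [if_neg (by simp [hkk])]
    rcases dyadicIco_inter_eq_or hss m m' with hI | hI
    · rw [hI, setIntegral_walsh_dyadicIco (lowExp_lt_size_xor hk hk' hkk), mul_zero]
    · simp [hI]

end LocalizedWalsh

section Density

variable {φ Φ : ℝ → ℝ}

lemma map_withDensity_cdf (hφ0 : ∀ x, 0 ≤ φ x) (hφint : Integrable φ) (hφ1 : ∫ x, φ x = 1)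
    (hΦdef : ∀ x, Φ x = ∫ t in Iic x, φ t) (hΦmono : StrictMono Φ)
    (hΦrange : range Φ = Ioo 0 1) :
    (volume.withDensity fun x => ENNReal.ofReal (φ x)).map Φ = volume.restrict (Ioo 0 1) := by
  set μ := volume.withDensity fun x => ENNReal.ofReal (φ x)
  have hμ (A : Set ℝ) (hA : MeasurableSet A) : μ A = ENNReal.ofReal (∫ x in A, φ x) := by
    rw [withDensity_apply _ hA,
      ofReal_integral_eq_lintegral_ofReal hφint.integrableOn (ae_of_all _ hφ0)]
  have hΦmem (x : ℝ) : Φ x ∈ Ioo 0 1 := hΦrange ▸ mem_range_self x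
  have hΦmeas : Measurable Φ := hΦmono.monotone.measurable
  have : IsProbabilityMeasure μ :=
    ⟨by rw [hμ univ MeasurableSet.univ, setIntegral_univ, hφ1, ENNReal.ofReal_one]⟩
  have := Measure.isProbabilityMeasure_map (μ := μ) hΦmeas.aemeasurable
  refine Measure.ext_of_Iic _ _ fun y => ?_
  rw [Measure.map_apply hΦmeas measurableSet_Iic, Measure.restrict_apply measurableSet_Iic]
  rcases le_or_gt y 0 with hy0 | hy0
  · have hpre : Φ ⁻¹' Iic y = ∅ :=
      eq_empty_of_forall_notMem fun x hx => (lt_of_le_of_lt (hx.trans hy0) (hΦmem x).1).false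
    have hinter : Iic y ∩ Ioo 0 1 = ∅ :=
      eq_empty_of_forall_notMem fun z ⟨hz, hz'⟩ => (lt_of_le_of_lt (hz.trans hy0) hz'.1).false
    rw [hpre, hinter, measure_empty, measure_empty]
  rcases lt_or_ge y 1 with hy1 | hy1
  · obtain ⟨x₀, rfl⟩ : y ∈ range Φ := hΦrange ▸ ⟨hy0, hy1⟩
    have hpre : Φ ⁻¹' Iic (Φ x₀) = Iic x₀ := by
      ext x
      simp [hΦmono.le_iff_le]
    have hinter : Iic (Φ x₀) ∩ Ioo 0 1 = Ioc 0 (Φ x₀) := by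
      ext z
      simp only [mem_inter_iff, mem_Iic, mem_Ioo, mem_Ioc]
      constructor
      · rintro ⟨hz, hz0, -⟩; exact ⟨hz0, hz⟩
      · rintro ⟨hz0, hz⟩; exact ⟨hz, hz0, hz.trans_lt hy1⟩
    rw [hpre, hinter, hμ _ measurableSet_Iic, ← hΦdef, Real.volume_Ioc, sub_zero]
  · have hpre : Φ ⁻¹' Iic y = univ := eq_univ_of_forall fun x => ((hΦmem x).2.le.trans hy1)
    rw [hpre, inter_eq_right.2 fun z hz => hz.2.le.trans hy1, measure_univ, Real.volume_Ioo,
      sub_zero, ENNReal.ofReal_one]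

lemma integral_comp_cdf_mul_density (hφ0 : ∀ x, 0 ≤ φ x) (hφint : Integrable φ)
    (hφ1 : ∫ x, φ x = 1) (hΦdef : ∀ x, Φ x = ∫ t in Iic x, φ t) (hΦmono : StrictMono Φ)
    (hΦrange : range Φ = Ioo 0 1) {g : ℝ → ℝ} (hg : Measurable g) :
    ∫ x, g (Φ x) * φ x = ∫ y in Ioo 0 1, g y := by
  rw [← map_withDensity_cdf hφ0 hφint hφ1 hΦdef hΦmono hΦrange,
    integral_map hΦmono.monotone.measurable.aemeasurable hg.aestronglyMeasurable,
    integral_withDensity_eq_integral_toReal_smul₀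
      hφint.aemeasurable.ennreal_ofReal
      (ae_of_all _ fun _ => ENNReal.ofReal_lt_top)]
  congr with x
  rw [ENNReal.toReal_ofReal (hφ0 x), smul_eq_mul, mul_comm]

end Density

theorem stmt5_general (φ : ℝ → ℝ) (hφ0 : ∀ x, 0 ≤ φ x) (hφint : Integrable φ)
    (hφ1 : (∫ x, φ x) = 1)
    (Φ : ℝ → ℝ) (hΦdef : ∀ x, Φ x = ∫ t in Set.Iic x, φ t)
    (hΦmono : StrictMono Φ)
    (hΦrange : Set.range Φ = Set.Ioo 0 1)
    (k k' m m' : ℕ) (hk : inN2 k) (hk' : inN2 k')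
    (hm : m ∈ L2 k) (hm' : m' ∈ L2 k') :
    (∫ x : ℝ, w2 k m (Φ x) * w2 k' m' (Φ x) * φ x)
      = if (k, m) = (k', m') then 1 else 0 := by
  rw [integral_comp_cdf_mul_density (g := fun y => w2 k m y * w2 k' m' y) hφ0 hφint hφ1 hΦdef
      hΦmono hΦrange ((measurable_w2 k m).mul (measurable_w2 k' m')),
    setIntegral_congr_set Ioo_ae_eq_Ico]
  exact integral_w2_mul_w2 hk hk' hm hm'

theorem stmt5 (φ : ℝ → ℝ) (hφ0 : ∀ x, 0 ≤ φ x) (hφint : Integrable φ)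
    (hφ1 : (∫ x, φ x) = 1)
    (Φ : ℝ → ℝ) (hΦdef : ∀ x, Φ x = ∫ t in Set.Iic x, φ t)
    (hΦcont : Continuous Φ) (hΦmono : StrictMono Φ)
    (hΦrange : Set.range Φ = Set.Ioo 0 1)
    (k k' m m' : ℕ) (hk : inN2 k) (hk' : inN2 k')
    (hm : m ∈ L2 k) (hm' : m' ∈ L2 k') :
    (∫ x : ℝ, w2 k m (Φ x) * w2 k' m' (Φ x) * φ x)
      = if (k, m) = (k', m') then 1 else 0 :=
  stmt5_general φ hφ0 hφint hφ1 Φ hΦdef hΦmono hΦrange k k' m m' hk hk' hm hm'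

end
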